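/- Let α > 0, let Φ : (0,α] → [0,∞) be continuous and bounded, let ρ : ℝ → [0,1] be measurable and even, and let G be the kernel associated with α and Φ. Let E(x,t) = (4πt)^{−1/2} exp(−x²/(4t)) for t > 0 and E(x,t) = 0 for t ≤ 0 denote the one-dimensional heat kernel. Then for every x > 0, with t = x²/α², the following change-of-variables identity holds: 2 ∫_{−x}^{x} ( ∫_{α|y|/x}^{α} E(x−y, t − y²/ζ²) · Φ(ζ)/ζ³ dζ ) ρ(y) y² dy = x² ∫_{−1}^{1} G(θ) ρ(xθ) θ² dθ. -/

import Mathlib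

open MeasureTheory Set Filter Topology

/-- The kernel G associated with α and Φ:
G(θ) = (α/√π) ∫_{α|θ|}^{α} (ζ² - α²θ²)^{-1/2}
         exp(-α²ζ²(1-θ)²/(4(ζ² - α²θ²))) Φ(ζ)/ζ² dζ. -/
noncomputable def kernelG (α : ℝ) (Φ : ℝ → ℝ) (θ : ℝ) : ℝ :=
  (α / Real.sqrt Real.pi) *
    ∫ ζ in (α * |θ|)..α,
      (1 / Real.sqrt (ζ ^ 2 - α ^ 2 * θ ^ 2)) *
        Real.exp (-(α ^ 2 * ζ ^ 2 * (1 - θ) ^ 2) / (4 * (ζ ^ 2 - α ^ 2 * θ ^ 2))) *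
        (Φ ζ / ζ ^ 2)


/-- The one-dimensional heat kernel E(x,t) = (4πt)^{-1/2} exp(-x²/(4t)) for t > 0,
and 0 for t ≤ 0. -/
noncomputable def heatKernel (x t : ℝ) : ℝ :=
  if 0 < t then (1 / Real.sqrt (4 * Real.pi * t)) * Real.exp (-x ^ 2 / (4 * t)) else 0

/-- The change-of-variables identity: for x > 0 and t = x²/α²,
2 ∫_{-x}^x (∫_{α|y|/x}^α E(x-y, t - y²/ζ²) Φ(ζ)/ζ³ dζ) ρ(y) y² dy
  = x² ∫_{-1}^1 G(θ) ρ(xθ) θ² dθ. -/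
theorem heat_kernel_change_of_variables
    (α : ℝ) (hα : 0 < α) (Φ : ℝ → ℝ)
    (hΦcont : ContinuousOn Φ (Ioc 0 α))
    (hΦnonneg : ∀ ζ ∈ Ioc (0:ℝ) α, 0 ≤ Φ ζ)
    (hΦbdd : ∃ C : ℝ, ∀ ζ ∈ Ioc (0:ℝ) α, Φ ζ ≤ C)
    (ρ : ℝ → ℝ) (hρmeas : Measurable ρ)
    (hρ01 : ∀ y, ρ y ∈ Icc (0:ℝ) 1)
    (hρeven : ∀ y, ρ (-y) = ρ y) :
    ∀ x > (0:ℝ),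
      2 * ∫ y in (-x)..x,
          (∫ ζ in (α * |y| / x)..α,
            heatKernel (x - y) (x ^ 2 / α ^ 2 - y ^ 2 / ζ ^ 2) * (Φ ζ / ζ ^ 3)) *
          ρ y * y ^ 2
        = x ^ 2 * ∫ θ in (-1:ℝ)..1, kernelG α Φ θ * ρ (x * θ) * θ ^ 2 := by
  intro x hx
  have hx0 : x ≠ 0 := ne_of_gt hx
  have hα0 : α ≠ 0 := ne_of_gt hα
  have hπ : (0:ℝ) < Real.sqrt Real.pi := Real.sqrt_pos.mpr Real.pi_pos
  -- Step 1 : inner integral equals (1/(2x)) * kernelG α Φ (y/x)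
  have key : ∀ y : ℝ, |y| ≤ x →
      (∫ ζ in (α * |y| / x)..α,
        heatKernel (x - y) (x ^ 2 / α ^ 2 - y ^ 2 / ζ ^ 2) * (Φ ζ / ζ ^ 3))
      = (1/(2*x)) * kernelG α Φ (y/x) := by
    intro y hy
    have habs : α * |y / x| = α * |y| / x := by
      rw [abs_div, abs_of_pos hx]; ring
    rw [kernelG, habs, ← mul_assoc, ← intervalIntegral.integral_const_mul]
    apply intervalIntegral.integral_congr
    intro ζ hζ
    have hlow : 0 ≤ α * |y| / x := by positivity
    have hle : α * |y| / x ≤ α := by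
      rw [div_le_iff₀ hx]
      calc α * |y| ≤ α * x := by nlinarith [abs_nonneg y]
        _ = α * x := rfl
    rw [uIcc_of_le hle] at hζ
    obtain ⟨hζ1, hζ2⟩ := hζ
    dsimp only
    rcases eq_or_lt_of_le (le_trans hlow hζ1) with hζ0 | hζ0
    · -- ζ = 0
      simp [← hζ0, heatKernel, div_eq_mul_inv]
    · -- ζ > 0
      have hs0 : 0 ≤ ζ ^ 2 - α ^ 2 * (y/x) ^ 2 := by
        have h1 : α * |y| / x ≤ ζ := hζ1
        have h2 : (α * |y| / x) ^ 2 ≤ ζ ^ 2 := by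
          apply sq_le_sq' <;> nlinarith
        have : (α * |y| / x) ^ 2 = α ^ 2 * (y/x) ^ 2 := by
          rw [div_pow, mul_pow, sq_abs]; ring
        linarith [this ▸ h2]
      rcases eq_or_lt_of_le hs0 with hs | hs
      · -- s = 0 : t = 0, both sides vanish
        have ht : x ^ 2 / α ^ 2 - y ^ 2 / ζ ^ 2 = 0 := by
          have hζne : ζ ≠ 0 := ne_of_gt hζ0
          have : ζ ^ 2 = α ^ 2 * (y/x)^2 := by linarith
          field_simp at this ⊢
          nlinarith [this]
        rw [ht]
        simp [heatKernel, ← hs]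
      · -- main case
        set θ := y / x with hθ
        set s := ζ ^ 2 - α ^ 2 * θ ^ 2 with hsdef
        have hζne : ζ ≠ 0 := ne_of_gt hζ0
        have hsne : s ≠ 0 := ne_of_gt hs
        have ht : x ^ 2 / α ^ 2 - y ^ 2 / ζ ^ 2 = x ^ 2 * s / (α ^ 2 * ζ ^ 2) := by
          rw [hsdef, hθ]; field_simp
        have ht0' : (0:ℝ) < x ^ 2 * s / (α ^ 2 * ζ ^ 2) := by positivity
        rw [ht]
        simp only [heatKernel, if_pos ht0']
        have hsqrt : Real.sqrt (4 * Real.pi * (x ^ 2 * s / (α ^ 2 * ζ ^ 2)))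
            = 2 * Real.sqrt Real.pi * (x / (α * ζ) * Real.sqrt s) := by
          rw [show 4 * Real.pi * (x ^ 2 * s / (α ^ 2 * ζ ^ 2))
              = (2 * Real.sqrt Real.pi * (x / (α * ζ))) ^ 2 * s by
            rw [mul_pow, mul_pow, Real.sq_sqrt Real.pi_pos.le]; ring]
          rw [Real.sqrt_mul (sq_nonneg _), Real.sqrt_sq (by positivity)]
          ring
        have hexp : -(x - y) ^ 2 / (4 * (x ^ 2 * s / (α ^ 2 * ζ ^ 2)))
            = -(α ^ 2 * ζ ^ 2 * (1 - θ) ^ 2) / (4 * s) := by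
          rw [hθ, hsdef]; field_simp
        rw [hsqrt, hexp]
        have hss : Real.sqrt s ≠ 0 := ne_of_gt (Real.sqrt_pos.mpr hs)
        field_simp
  -- Step 2 : change of variables y = x θ
  have outer : (∫ y in (-x)..x,
      (∫ ζ in (α * |y| / x)..α,
        heatKernel (x - y) (x ^ 2 / α ^ 2 - y ^ 2 / ζ ^ 2) * (Φ ζ / ζ ^ 3)) *
      ρ y * y ^ 2)
      = ∫ y in (-x)..x,
          (1/(2*x)) * (x ^ 2 * (kernelG α Φ (y/x) * ρ (x * (y/x)) * (y/x) ^ 2)) := by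
    apply intervalIntegral.integral_congr
    intro y hy
    dsimp only
    rw [uIcc_of_le (by linarith)] at hy
    have hyabs : |y| ≤ x := abs_le.mpr ⟨hy.1, hy.2⟩
    rw [key y hyabs]
    rw [mul_div_cancel₀ y hx0]
    field_simp
  rw [outer, intervalIntegral.integral_const_mul, intervalIntegral.integral_const_mul,
    intervalIntegral.integral_comp_div (f := fun θ => kernelG α Φ θ * ρ (x * θ) * θ ^ 2) hx0]
  rw [neg_div, div_self hx0, smul_eq_mul]
  field_simp
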